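/- arXiv:2106.09466 — 2 statements merged into one kernel-verified Lean document; each statement's English description precedes it below -/
import Mathlib

section
/- Conversely, let f : X → ℝ be convex lower semicontinuous on a locally convex space X, and suppose that for every bounded balanced set B ⊆ X with associated support seminorm p_B on the dual there is C_B ∈ ℝ with f*(T) ≥ p_B(T) + C_B for all T in the dual. Then f is bounded above on every bounded subset of X. -/
/-!
A convex lower semicontinuous `f` is the supremum of the continuous affine functions `l + c`
below it. Each such minorant has `f*(l) ≤ -c`, so for `x ∈ B` the hypothesis applied to `l` and
the balanced hull of `B` gives `l x + c ≤ -C`; taking the supremum over the minorants,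
`f x ≤ -C` on `B`.
-/

open Bornology Set

theorem Bornology.IsVonNBounded.balancedHull {𝕜 E : Type*} [NontriviallyNormedField 𝕜]
    [AddCommGroup E] [Module 𝕜 E] [TopologicalSpace E] [ContinuousSMul 𝕜 E] {B : Set E}
    (hB : IsVonNBounded 𝕜 B) : IsVonNBounded 𝕜 (balancedHull 𝕜 B) := by
  intro V hV
  filter_upwards [(hB (balancedCore_mem_nhds_zero (𝕜 := 𝕜) hV)).eventually] with a ha
  exact ((balancedCore_balanced V).smul a).balancedHull_subset_of_subset ha |>.trans
    (smul_set_mono (balancedCore_subset V))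

section

variable {E : Type*} [AddCommGroup E] [Module ℝ E] [TopologicalSpace E]

theorem ConvexOn.exists_continuousLinearMap_add_le_of_lt [IsTopologicalAddGroup E]
    [ContinuousSMul ℝ E] [LocallyConvexSpace ℝ E] {f : E → ℝ} (hf : ConvexOn ℝ univ f)
    (hlsc : LowerSemicontinuous f) {x : E} {a : ℝ} (ha : a < f x) :
    ∃ (l : E →L[ℝ] ℝ) (c : ℝ), (∀ y, l y + c ≤ f y) ∧ l x + c = a := by
  obtain ⟨l, c, hle, heq⟩ := hf.exists_affine_le_of_lt (𝕜 := ℝ) (mem_univ x) ha isClosed_univ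
    (hlsc.lowerSemicontinuousOn univ)
  exact ⟨l, c, fun y => hle ⟨y, mem_univ y⟩, heq⟩

theorem iSup_sub_le_of_add_le {f : E → ℝ} {l : E →L[ℝ] ℝ} {c : ℝ} (h : ∀ y, l y + c ≤ f y) :
    ⨆ y : E, ((l y : EReal) - (f y : EReal)) ≤ ((-c : ℝ) : EReal) :=
  iSup_le fun y => by
    rw [← EReal.coe_sub, EReal.coe_le_coe_iff]
    linarith [h y]

end

/-- Conversely, if a real-valued convex lower semicontinuous function `f` on a locally convex
space has a supercoercive convex conjugate (a lower bound `f*(T) ≥ p_B(T) + C_B` for the support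
seminorm of each bounded balanced set `B`), then `f` is bounded above on every bounded set. -/
theorem bounded_on_bounded_of_conjugate_supercoercive
    {X : Type*} [AddCommGroup X] [Module ℝ X] [TopologicalSpace X]
    [IsTopologicalAddGroup X] [ContinuousSMul ℝ X] [LocallyConvexSpace ℝ X]
    (f : X → ℝ)
    (hconvex : ConvexOn ℝ Set.univ f)
    (hlsc : LowerSemicontinuous f)
    (hsc : ∀ B : Set X, IsVonNBounded ℝ B → Balanced ℝ B →
      ∃ C : ℝ, ∀ T : X →L[ℝ] ℝ,
        (⨆ φ ∈ B, ((T φ : EReal))) + (C : EReal) ≤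
          ⨆ φ : X, ((T φ : EReal) - (f φ : EReal))) :
    ∀ B : Set X, IsVonNBounded ℝ B → ∃ M : ℝ, ∀ x ∈ B, f x ≤ M := by
  intro B hB
  obtain ⟨C, hC⟩ := hsc (balancedHull ℝ B) hB.balancedHull (balancedHull.balanced B)
  refine ⟨-C, fun x hx => le_of_forall_lt_imp_le_of_dense fun a ha => ?_⟩
  obtain ⟨l, c, hle, rfl⟩ := hconvex.exists_continuousLinearMap_add_le_of_lt hlsc ha
  have hlx : (l x : EReal) ≤ ⨆ φ ∈ balancedHull ℝ B, (l φ : EReal) :=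
    le_biSup (fun φ => (l φ : EReal)) (subset_balancedHull ℝ hx)
  have hbound : ((l x + C : ℝ) : EReal) ≤ ((-c : ℝ) : EReal) :=
    (add_le_add_left hlx _).trans ((hC l).trans (iSup_sub_le_of_add_le hle))
  rw [EReal.coe_le_coe_iff] at hbound
  linarith
end

section
/- Let ν be a centered Gaussian measure on a locally convex space X with Cameron–Martin space H(ν) and reproducing kernel Hilbert space X′_ν, and let R_ν : X′_ν → X be defined by K(R_ν T) = ∫ K(ψ) T(ψ) dν(ψ) for all K ∈ X′. Then R_ν is an isometric isomorphism from X′_ν onto H(ν). -/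
/-!
By Fernique's theorem a Gaussian measure has a finite second moment, so for `f ∈ L²(ν)` the
Bochner integral `R f = ∫ f(x) • x dν` exists and `K (R f) = ⟪K, f⟫_{L²(ν)}` for every `K` in the
dual. The rest is Hilbert-space geometry of the closure `V` of the dual in `L²(ν)`: for `f ∈ V`
the Cameron–Martin norm of `R f` is the supremum of `⟪g, f⟫` over the unit ball of a dense
subspace of `V`, hence `‖f‖`, which also gives injectivity on `V`. Conversely, if `h` has finite
Cameron–Martin norm, `T ↦ T h` is bounded for the `L²(ν)` norm of `T`, and its Riesz
representative `f ∈ V` satisfies `R f = h`.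
-/

open MeasureTheory

variable {E : Type*} [NormedAddCommGroup E] [NormedSpace ℝ E] [CompleteSpace E]
  [SecondCountableTopology E] [MeasurableSpace E] [BorelSpace E]

/-- The set of values `T h` over continuous linear functionals `T` with `∫ T² dν ≤ 1`;
its supremum is the Cameron–Martin norm of `h` and the Cameron–Martin space `H(ν)` consists
of those `h` for which this set is bounded above. -/
def cmSet (ν : Measure E) (h : E) : Set ℝ :=
  {r : ℝ | ∃ T : E →L[ℝ] ℝ, (∫ x, (T x) ^ 2 ∂ν) ≤ 1 ∧ r = T h}

open Filter Topology ProbabilityTheory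
open scoped RealInnerProductSpace ENNReal

section InnerProductRepresentation

variable {G F : Type*} [AddCommGroup G] [Module ℝ G]
  [NormedAddCommGroup F] [InnerProductSpace ℝ F] (j : G →ₗ[ℝ] F)

theorem isLUB_inner_of_mem_closure_range {f : F} (hf : f ∈ closure (Set.range j)) :
    IsLUB {r | ∃ T, ‖j T‖ ≤ 1 ∧ r = ⟪j T, f⟫} ‖f‖ := by
  refine isLUB_of_mem_closure ?_ ?_
  · rintro _ ⟨T, hT, rfl⟩
    exact (real_inner_le_norm _ _).trans (mul_le_of_le_one_left (norm_nonneg _) hT)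
  rcases eq_or_ne f 0 with rfl | hf0
  · exact subset_closure ⟨0, by simp, by simp⟩
  -- normalized approximants `j T → f` give values tending to `⟪f / ‖f‖, f⟫ = ‖f‖`
  have hcont : ContinuousAt (fun u : F => ⟪‖u‖⁻¹ • u, f⟫) f := by
    fun_prop (disch := simpa using hf0)
  have hval : ⟪‖f‖⁻¹ • f, f⟫ = ‖f‖ := by
    rw [real_inner_smul_left, real_inner_self_eq_norm_sq]
    field_simp
  have hmem := mem_closure_image hcont hf
  simp only [hval] at hmem
  refine closure_mono ?_ hmem
  rintro _ ⟨_, ⟨T, rfl⟩, rfl⟩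
  refine ⟨‖j T‖⁻¹ • T, ?_, by rw [map_smul]⟩
  rw [map_smul, norm_smul, norm_inv, norm_norm]
  exact inv_mul_le_one_of_le₀ le_rfl (norm_nonneg _)

theorem exists_mem_closure_range_inner_eq [CompleteSpace F] (φ : G →ₗ[ℝ] ℝ) {M : ℝ}
    (hφ : ∀ T, φ T ≤ M * ‖j T‖) :
    ∃ f ∈ closure (Set.range j), ∀ T, ⟪j T, f⟫ = φ T := by
  have habs : ∀ T, |φ T| ≤ M * ‖j T‖ := fun T =>
    abs_le.2 ⟨neg_le.1 (by simpa using hφ (-T)), hφ T⟩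
  have hker : LinearMap.ker j ≤ LinearMap.ker φ := fun T hT => by
    simpa [LinearMap.mem_ker.1 hT] using habs T
  let ψ : LinearMap.range j →ₗ[ℝ] ℝ :=
    (LinearMap.ker j).liftQ φ hker ∘ₗ j.quotKerEquivRange.symm.toLinearMap
  have hψ : ∀ T, ψ ⟨j T, LinearMap.mem_range_self j T⟩ = φ T := fun T => by
    simp [ψ, LinearMap.quotKerEquivRange_symm_apply_image]
  have hψM : ∀ w, ‖ψ w‖ ≤ M * ‖w‖ := by
    rintro ⟨_, T, rfl⟩
    simpa [hψ] using habs T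
  obtain ⟨g, hg, -⟩ := exists_extension_norm_eq _ (ψ.mkContinuous M hψM)
  -- Riesz representative of a Hahn–Banach extension, projected back onto the closure of `range j`
  let V := (LinearMap.range j).topologicalClosure
  refine ⟨V.starProjection ((InnerProductSpace.toDual ℝ F).symm g), ?_, fun T => ?_⟩
  · rw [← LinearMap.coe_range, ← Submodule.topologicalClosure_coe]
    exact V.starProjection_apply_mem _
  · have hjT : j T ∈ V :=
      (LinearMap.range j).le_topologicalClosure (LinearMap.mem_range_self j T)
    rw [← V.inner_starProjection_left_eq_right, Submodule.starProjection_eq_self_iff.2 hjT,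
      real_inner_comm, InnerProductSpace.toDual_symm_apply]
    simpa [hψ] using hg ⟨j T, LinearMap.mem_range_self j T⟩

end InnerProductRepresentation

section DualRepresentation

variable {X F : Type*} [NormedAddCommGroup X] [NormedSpace ℝ X]
  [NormedAddCommGroup F] [InnerProductSpace ℝ F] (j : StrongDual ℝ X →ₗ[ℝ] F)

def evalUnitBall (h : X) : Set ℝ :=
  {r | ∃ T, ‖j T‖ ≤ 1 ∧ r = T h}

theorem isLUB_evalUnitBall {R : F → X} (hR : ∀ f (K : StrongDual ℝ X), K (R f) = ⟪j K, f⟫)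
    {f : F} (hf : f ∈ closure (Set.range j)) : IsLUB (evalUnitBall j (R f)) ‖f‖ := by
  simpa only [evalUnitBall, hR] using isLUB_inner_of_mem_closure_range j hf

theorem csSup_evalUnitBall {R : F → X} (hR : ∀ f (K : StrongDual ℝ X), K (R f) = ⟪j K, f⟫)
    {f : F} (hf : f ∈ closure (Set.range j)) : sSup (evalUnitBall j (R f)) = ‖f‖ :=
  (isLUB_evalUnitBall j hR hf).csSup_eq ⟨0, 0, by simp, by simp⟩

theorem injOn_closure_range {R : F → X} (hR : ∀ f (K : StrongDual ℝ X), K (R f) = ⟪j K, f⟫) :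
    Set.InjOn R (closure (Set.range j)) := by
  intro f hf f' hf' heq
  have hsub : f - f' ∈ closure (Set.range j) := by
    rw [← LinearMap.coe_range, ← Submodule.topologicalClosure_coe] at *
    exact sub_mem hf hf'
  have hle : ‖f - f'‖ ≤ 0 := (isLUB_inner_of_mem_closure_range j hsub).2 <| by
    rintro _ ⟨T, -, rfl⟩
    rw [inner_sub_right, ← hR, ← hR, heq, sub_self]
  exact sub_eq_zero.1 (norm_le_zero_iff.1 hle)

theorem exists_le_mul_norm_of_bddAbove {h : X} (hh : BddAbove (evalUnitBall j h)) :
    ∃ M, ∀ T, T h ≤ M * ‖j T‖ := by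
  obtain ⟨M, hM⟩ := hh
  refine ⟨M, fun T => ge_of_tendsto (f := fun ε : ℝ => M * (‖j T‖ + ε)) (x := 𝓝[>] 0) ?_ ?_⟩
  · have hcont : Continuous fun ε : ℝ => M * (‖j T‖ + ε) := by fun_prop
    simpa using (hcont.tendsto 0).mono_left nhdsWithin_le_nhds
  · filter_upwards [self_mem_nhdsWithin] with ε (hε : 0 < ε)
    have hpos : 0 < ‖j T‖ + ε := by positivity
    have hT : ‖j ((‖j T‖ + ε)⁻¹ • T)‖ ≤ 1 := by
      rw [map_smul, norm_smul, norm_inv, Real.norm_of_nonneg hpos.le, inv_mul_le_one₀ hpos]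
      linarith
    have := hM ⟨_, hT, rfl⟩
    rwa [smul_apply, smul_eq_mul, inv_mul_le_iff₀ hpos, mul_comm] at this

theorem image_closure_range_eq [CompleteSpace F] {R : F → X}
    (hR : ∀ f (K : StrongDual ℝ X), K (R f) = ⟪j K, f⟫) :
    R '' closure (Set.range j) = {h | BddAbove (evalUnitBall j h)} := by
  ext h
  constructor
  · rintro ⟨f, hf, rfl⟩
    exact (isLUB_evalUnitBall j hR hf).bddAbove
  · intro hh
    obtain ⟨M, hM⟩ := exists_le_mul_norm_of_bddAbove j hh
    obtain ⟨f, hf, hfT⟩ :=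
      exists_mem_closure_range_inner_eq j (ContinuousLinearMap.apply ℝ ℝ h).toLinearMap hM
    refine ⟨f, hf, (SeparatingDual.eq_iff_forall_dual_eq (R := ℝ)).2 fun T => ?_⟩
    rw [hR, hfT]
    rfl

end DualRepresentation

section SecondMoment

variable {X : Type*} [NormedAddCommGroup X] [NormedSpace ℝ X] [MeasurableSpace X]
  {ν : Measure X}

theorem integrable_smul_id_of_memLp_two (hid : MemLp id 2 ν) (f : Lp ℝ 2 ν) :
    Integrable (fun x => f x • x) ν :=
  memLp_one_iff_integrable.1 (hid.smul (Lp.memLp f))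

theorem apply_integral_smul_id [CompleteSpace X] (hid : MemLp id 2 ν) (f : Lp ℝ 2 ν)
    (K : StrongDual ℝ X) : K (∫ x, f x • x ∂ν) = ∫ x, K x * f x ∂ν := by
  rw [← K.integral_comp_comm (integrable_smul_id_of_memLp_two hid f)]
  simp only [map_smul, smul_eq_mul, mul_comm]

theorem toLpₗ_ae_eq {p : ℝ≥0∞} (hid : MemLp id p ν) (K : StrongDual ℝ X) :
    StrongDual.toLpₗ ν p K =ᵐ[ν] K := by
  rw [StrongDual.toLpₗ_apply hid]
  exact MemLp.coeFn_toLp _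

theorem inner_toLpₗ (hid : MemLp id 2 ν) (K : StrongDual ℝ X) (f : Lp ℝ 2 ν) :
    ⟪StrongDual.toLpₗ ν 2 K, f⟫ = ∫ x, K x * f x ∂ν := by
  rw [L2.inner_def]
  refine integral_congr_ae ?_
  filter_upwards [toLpₗ_ae_eq hid K] with x hx
  simp [hx, mul_comm]

theorem norm_toLpₗ_sq (hid : MemLp id 2 ν) (K : StrongDual ℝ X) :
    ‖StrongDual.toLpₗ ν 2 K‖ ^ 2 = ∫ x, (K x) ^ 2 ∂ν := by
  rw [← real_inner_self_eq_norm_sq, inner_toLpₗ hid]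
  refine integral_congr_ae ?_
  filter_upwards [toLpₗ_ae_eq hid K] with x hx
  simp [hx, sq]

theorem cmSet_eq_evalUnitBall (hid : MemLp id 2 ν) (h : X) :
    cmSet ν h = evalUnitBall (StrongDual.toLpₗ ν 2) h := by
  simp only [cmSet, evalUnitBall, ← norm_toLpₗ_sq hid, sq_le_one_iff₀ (norm_nonneg _)]

end SecondMoment

theorem isGaussian_of_forall_map_eq_gaussianReal {X : Type*} [TopologicalSpace X]
    [AddCommMonoid X] [Module ℝ X] [MeasurableSpace X] [OpensMeasurableSpace X] {ν : Measure X}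
    (h : ∀ L : StrongDual ℝ X, ∃ m v, ν.map L = gaussianReal m v) : IsGaussian ν :=
  isGaussian_of_isGaussian_map fun L => by
    obtain ⟨m, v, hv⟩ := h L
    rw [hv]
    infer_instance

theorem cameronMartin_isometric_iso_general
    (ν : Measure E)
    (hGauss : ∀ T : E →L[ℝ] ℝ, ∃ v : NNReal, ν.map T = ProbabilityTheory.gaussianReal 0 v)
    (hL2 : ∀ T : E →L[ℝ] ℝ, MemLp (fun x => T x) 2 ν) :
    ∃ R : Lp ℝ 2 ν → E,
      Set.InjOn R (closure (Set.range fun T : E →L[ℝ] ℝ => (hL2 T).toLp _)) ∧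
      R '' (closure (Set.range fun T : E →L[ℝ] ℝ => (hL2 T).toLp _)) =
        {h : E | BddAbove (cmSet ν h)} ∧
      (∀ f ∈ closure (Set.range fun T : E →L[ℝ] ℝ => (hL2 T).toLp _),
        ∀ K : E →L[ℝ] ℝ, K (R f) = ∫ x, K x * f x ∂ν) ∧
      (∀ f ∈ closure (Set.range fun T : E →L[ℝ] ℝ => (hL2 T).toLp _),
        sSup (cmSet ν (R f)) = ‖f‖) := by
  have : IsGaussian ν := isGaussian_of_forall_map_eq_gaussianReal fun T => ⟨0, hGauss T⟩
  have hid : MemLp id 2 ν := IsGaussian.memLp_two_id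
  have hj : (fun T : E →L[ℝ] ℝ => (hL2 T).toLp _) = StrongDual.toLpₗ ν 2 := by
    funext T
    rw [StrongDual.toLpₗ_apply hid]
  have hR : ∀ (f : Lp ℝ 2 ν) (K : StrongDual ℝ E),
      K (∫ x, f x • x ∂ν) = ⟪StrongDual.toLpₗ ν 2 K, f⟫ := fun f K => by
    rw [apply_integral_smul_id hid, inner_toLpₗ hid]
  simp only [hj, cmSet_eq_evalUnitBall hid]
  exact ⟨fun f => ∫ x, f x • x ∂ν, injOn_closure_range _ hR, image_closure_range_eq _ hR,
    fun f _ K => apply_integral_smul_id hid f K, fun f hf => csSup_evalUnitBall _ hR hf⟩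

/-- For a centred Gaussian measure `ν` on a separable Banach space, the map `R_ν`, defined on
the reproducing kernel Hilbert space (the closure of the dual in `L²(ν)`) by
`K (R_ν f) = ∫ K ψ · f ψ dν ψ` for all `K` in the dual, is an isometric isomorphism onto the
Cameron–Martin space `H(ν)` (with its norm `‖h‖ = sSup (cmSet ν h)`). -/
theorem cameronMartin_isometric_iso
    (ν : Measure E) [IsProbabilityMeasure ν]
    (hGauss : ∀ T : E →L[ℝ] ℝ, ∃ v : NNReal, ν.map T = ProbabilityTheory.gaussianReal 0 v)
    (hL2 : ∀ T : E →L[ℝ] ℝ, MemLp (fun x => T x) 2 ν) :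
    ∃ R : Lp ℝ 2 ν → E,
      Set.InjOn R (closure (Set.range fun T : E →L[ℝ] ℝ => (hL2 T).toLp _)) ∧
      R '' (closure (Set.range fun T : E →L[ℝ] ℝ => (hL2 T).toLp _)) =
        {h : E | BddAbove (cmSet ν h)} ∧
      (∀ f ∈ closure (Set.range fun T : E →L[ℝ] ℝ => (hL2 T).toLp _),
        ∀ K : E →L[ℝ] ℝ, K (R f) = ∫ x, K x * f x ∂ν) ∧
      (∀ f ∈ closure (Set.range fun T : E →L[ℝ] ℝ => (hL2 T).toLp _),
        sSup (cmSet ν (R f)) = ‖f‖) :=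
  cameronMartin_isometric_iso_general ν hGauss hL2
end
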